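/- Let D ∈ ℝ[[X]] be the aeration of the Catalan generating function, i.e., the formal power series with [X^{2m}]D = C_m (the m-th Catalan number) and [X^{2m+1}]D = 0 for all m, so that D = c(X²) where c is the generating function of the Catalan numbers. Then X·D is the compositional inverse of X·(1+X²)⁻¹: substituting X·D into X·(1+X²)⁻¹ yields X. Moreover 1 + X²·D² = D, so that the Riordan array identity (c(x²), x·c(x²)) = (1/(1+x²), x/(1+x²))⁻¹ holds, i.e., (1/(1+x²), x/(1+x²))⁻¹ has first component c(X²) and second component X·c(X²). -/

import Mathlib

/-- Substitution (composition) of formal power series: `psComp h u = h ∘ u`,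
the series obtained by substituting `u` (with zero constant term) into `h`. -/
noncomputable def psComp (h u : PowerSeries ℝ) : PowerSeries ℝ :=
  PowerSeries.mk fun n =>
    ∑ k ∈ Finset.range (n + 1), PowerSeries.coeff k h * PowerSeries.coeff n (u ^ k)

/-!
`D` is the image of the Catalan series `c` under `x ↦ x²`, so `c = 1 + x c²` becomes
`D = 1 + X² D²`. The truncated sum `psComp` agrees with Mathlib's substitution, which is a ring
homomorphism; hence substituting `X D` into `1 + X²` gives `1 + X² D² = D`, into `(1 + X²)⁻¹`
gives `D⁻¹`, and into `X (1 + X²)⁻¹` gives `X D D⁻¹ = X`.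
-/

open PowerSeries Finset

namespace PowerSeries

theorem coeff_pow_eq_zero_of_lt {R : Type*} [CommSemiring R] {u : R⟦X⟧}
    (hu : constantCoeff u = 0) {n k : ℕ} (h : n < k) : coeff n (u ^ k) = 0 :=
  X_pow_dvd_iff.mp (pow_dvd_pow_of_dvd (X_dvd_iff.mpr hu) k) n h

theorem subst_inv {k : Type*} [Field k] {a : k⟦X⟧} (ha : HasSubst a) {f : k⟦X⟧}
    (hf : constantCoeff f ≠ 0) : f⁻¹.subst a = (f.subst a)⁻¹ := by
  have hmul : f⁻¹.subst a * f.subst a = 1 := by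
    rw [← subst_mul ha, PowerSeries.inv_mul_cancel f hf, ← coe_substAlgHom ha, map_one]
  have hunit : constantCoeff (f.subst a) ≠ 0 := right_ne_zero_of_mul_eq_one (by
    rw [← map_mul, hmul, map_one])
  exact (eq_inv_iff_mul_eq_one hunit).mpr hmul

variable (R : Type*) [CommRing R]

noncomputable def aeratedCatalanSeries : R⟦X⟧ :=
  expand 2 two_ne_zero (catalanSeries.map (Nat.castRingHom R))

variable {R}

theorem eq_aeratedCatalanSeries {D : R⟦X⟧}
    (heven : ∀ m : ℕ, coeff (2 * m) D = catalan m) (hodd : ∀ m : ℕ, coeff (2 * m + 1) D = 0) :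
    D = aeratedCatalanSeries R := by
  ext n
  obtain ⟨m, rfl | rfl⟩ := Nat.even_or_odd' n
  · simp [aeratedCatalanSeries, heven]
  · rw [hodd, aeratedCatalanSeries, coeff_expand_of_not_dvd _ _ _ (by omega)]

@[simp]
theorem constantCoeff_aeratedCatalanSeries : constantCoeff (aeratedCatalanSeries R) = 1 := by
  rw [aeratedCatalanSeries, constantCoeff_expand, ← coeff_zero_eq_constantCoeff_apply, coeff_map]
  simp

theorem one_add_X_sq_mul_aeratedCatalanSeries_sq :
    1 + X ^ 2 * aeratedCatalanSeries R ^ 2 = aeratedCatalanSeries R := by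
  have := congrArg (fun f => expand 2 two_ne_zero (f.map (Nat.castRingHom R)))
    catalanSeries_sq_mul_X_add_one
  simp only [map_add, map_mul, map_pow, map_X, map_one, expand_X] at this
  rw [aeratedCatalanSeries]
  linear_combination this

end PowerSeries

theorem psComp_eq_subst {u : ℝ⟦X⟧} (hu : constantCoeff u = 0) (h : ℝ⟦X⟧) :
    psComp h u = h.subst u := by
  ext n
  rw [psComp, coeff_mk, coeff_subst' (HasSubst.of_constantCoeff_zero' hu),
    finsum_eq_sum_of_support_subset (s := range (n + 1))]
  · rfl
  · intro k hk
    by_contra hkn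
    simp only [coe_range, Set.mem_Iio, not_lt] at hkn
    exact hk (by simp only [coeff_pow_eq_zero_of_lt hu (by omega : n < k), smul_zero])

/-- Let `D = c(x²)` be the aeration of the Catalan generating function. Then
`x·D` is the compositional inverse of `x/(1+x²)`, `1 + x²·D² = D`, and hence the
Riordan array identity `(c(x²), x·c(x²)) = (1/(1+x²), x/(1+x²))⁻¹` holds: the first
component of the inverse, `1/((1/(1+x²))∘(x·D))`, equals `c(x²) = D`. -/
theorem aerated_catalan_riordan_inverse (D : PowerSeries ℝ)
    (hDeven : ∀ m : ℕ, PowerSeries.coeff (2 * m) D = (catalan m : ℝ))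
    (hDodd : ∀ m : ℕ, PowerSeries.coeff (2 * m + 1) D = 0) :
    psComp (PowerSeries.X * (1 + PowerSeries.X ^ 2)⁻¹) (PowerSeries.X * D) =
      PowerSeries.X ∧
    1 + PowerSeries.X ^ 2 * D ^ 2 = D ∧
    (psComp (1 + PowerSeries.X ^ 2)⁻¹ (PowerSeries.X * D))⁻¹ = D := by
  have hD : D = aeratedCatalanSeries ℝ := eq_aeratedCatalanSeries hDeven hDodd
  have hkey : 1 + X ^ 2 * D ^ 2 = D := hD ▸ one_add_X_sq_mul_aeratedCatalanSeries_sq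
  have hD0 : constantCoeff D ≠ 0 := by simp [hD]
  have hXD : constantCoeff (X * D) = 0 := by simp
  have hsubst : HasSubst (X * D) := HasSubst.of_constantCoeff_zero' hXD
  have hdenom : (1 + X ^ 2 : ℝ⟦X⟧).subst (X * D) = D := by
    rw [subst_add hsubst, subst_pow hsubst, subst_X hsubst, ← coe_substAlgHom hsubst, map_one]
    linear_combination hkey
  have hinv : (1 + X ^ 2 : ℝ⟦X⟧)⁻¹.subst (X * D) = D⁻¹ := by
    rw [subst_inv hsubst (by simp), hdenom]
  refine ⟨?_, hkey, ?_⟩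
  · rw [psComp_eq_subst hXD, subst_mul hsubst, subst_X hsubst, hinv, mul_assoc,
      PowerSeries.mul_inv_cancel _ hD0, mul_one]
  · rw [psComp_eq_subst hXD, hinv, inv_eq_iff_mul_eq_one (by simpa using hD0),
      PowerSeries.mul_inv_cancel _ hD0]
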